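/- For every θ₀ ∈ (−π, π] and every λ > 1/2, set c := (2√3)⁻¹, a := (−cos θ₀ + √3 sin θ₀)/(2·3^{1/4}) and b := (−cos θ₀ − √3 sin θ₀)/(2·3^{1/4}). Then (2^{3/2}(2λ)^{3/4}/(π·Γ(3/2))) · ∫_{−π/3}^{π/3} ∫_0^∞ e^{r cos(θ−θ₀)} · r · √(π/2)·e^{−√(2λ)·r}·((√(2λ)·r)^{−1/2} + (√(2λ)·r)^{−3/2}) · cos(3θ/2) dr dθ = (4·2^{1/4}·λ^{3/4}/((1−2λ)√π)) · ( √(2 + b/√(cλ))·(b/√(cλ) − 1) + √(2 + a/√(cλ))·(a/√(cλ) − 1) ). -/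

import Mathlib

/-!
With `k = √(2λ)` and `μ = k - cos (θ - θ₀)`, the closed form of `K_{3/2}` turns the radial
integral into two Gamma integrals, with value `π / √(2k) · μ^{-1/2} (μ⁻¹ / 2 + k⁻¹)`.

The angular integral has an elementary primitive. Write
`cos (3θ/2) = cos (3θ₀/2) cos (3ψ/2) - sin (3θ₀/2) sin (3ψ/2)` with `ψ = θ - θ₀`. The substitution
`x = sin (ψ/2)` (resp. `x = cos (ψ/2)`) turns `cos (3ψ/2) dψ` (resp. `sin (3ψ/2) dψ`) into
`2 (1 - 4x²) dx` and `μ` into `k - e + 2ex²` with `e = 1` (resp. `e = -1`); the resulting integrand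
has the primitive `x (3k - 2e - 4(k - e)x²) / (k (k - e) √(k - e + 2ex²))`.
At `θ = ±π/3` the primitive collapses to `±√μ (k + 2 cos (π/3 ∓ θ₀)) / (k (k² - 1))`, and since
`b / √(cλ) = -2 cos (π/3 - θ₀) / k` and `a / √(cλ) = -2 cos (π/3 + θ₀) / k` the right-hand side
is the same expression.
-/

open MeasureTheory Real Set

theorem Real.Gamma_three_halves : Gamma (3 / 2) = √π / 2 := by
  rw [show (3:ℝ) / 2 = 1 / 2 + 1 by norm_num, Gamma_add_one (by norm_num), Gamma_one_half_eq]
  ring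

theorem Real.rpow_neg_one_half {x : ℝ} (hx : 0 ≤ x) : x ^ (-(1:ℝ) / 2) = (√x)⁻¹ := by
  rw [neg_div, rpow_neg hx, sqrt_eq_rpow]

theorem Real.rpow_neg_three_halves {x : ℝ} (hx : 0 < x) : x ^ (-(3:ℝ) / 2) = (√x)⁻¹ * x⁻¹ := by
  rw [show -(3:ℝ) / 2 = -(1:ℝ) / 2 + -1 by norm_num, rpow_add hx, rpow_neg_one_half hx.le,
    rpow_neg_one]

theorem Real.rpow_three_halves {x : ℝ} (hx : 0 ≤ x) : x ^ ((3:ℝ) / 2) = x * √x := by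
  rw [sqrt_eq_rpow, ← rpow_one_add' hx (by norm_num)]
  norm_num

theorem Real.rpow_three_quarters {x : ℝ} (hx : 0 ≤ x) : x ^ ((3:ℝ) / 4) = √x * √√x := by
  rw [sqrt_eq_rpow, sqrt_eq_rpow, ← rpow_mul hx, ← rpow_add' hx (by norm_num)]
  norm_num

theorem two_rpow_mul_rpow_three_quarters {x : ℝ} (hx : 0 ≤ x) :
    (2:ℝ) ^ ((1:ℝ) / 4) * x ^ ((3:ℝ) / 4) = √(2 * x) * √√(2 * x) / √2 := by
  rw [← rpow_three_quarters (by positivity), mul_rpow zero_le_two hx, eq_div_iff (by positivity),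
    sqrt_eq_rpow, mul_right_comm, ← rpow_add two_pos]
  norm_num

theorem sqrt_inv_two_sqrt_three_mul (x : ℝ) :
    √((2 * √3)⁻¹ * x) = √(2 * x) / (2 * (3:ℝ) ^ ((1:ℝ) / 4)) := by
  have hq2 : ((3:ℝ) ^ ((1:ℝ) / 4)) ^ 2 = √3 := by
    rw [← rpow_natCast, ← rpow_mul (by norm_num), sqrt_eq_rpow]; norm_num
  have h4 : (2:ℝ) * √√3 = √(4 * √3) := by
    rw [sqrt_mul zero_le_four, show (4:ℝ) = 2 ^ 2 by norm_num, sqrt_sq zero_le_two]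
  rw [← sqrt_sq (by positivity : 0 ≤ (3:ℝ) ^ ((1:ℝ) / 4)), hq2, h4, ← sqrt_div' _ (by positivity)]
  congr 1
  field_simp
  ring

theorem neg_cos_sub_sqrt_three_mul_sin (θ : ℝ) :
    -cos θ - √3 * sin θ = -2 * cos (π / 3 - θ) := by
  rw [cos_sub, cos_pi_div_three, sin_pi_div_three]
  ring

theorem neg_cos_add_sqrt_three_mul_sin (θ : ℝ) :
    -cos θ + √3 * sin θ = -2 * cos (π / 3 + θ) := by
  rw [cos_add, cos_pi_div_three, sin_pi_div_three]
  ring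

theorem sqrt_two_add_mul_sub_one {k : ℝ} (hk : 0 < k) (y : ℝ) :
    √(2 + -2 * y / k) * (-2 * y / k - 1) = -(√2 * √(k - y) * (k + 2 * y) / (k * √k)) := by
  have hsk : 0 < √k := sqrt_pos.mpr hk
  rw [show 2 + -2 * y / k = 2 * (k - y) / k by field_simp; ring,
    sqrt_div' _ hk.le, sqrt_mul zero_le_two]
  field_simp
  ring

noncomputable def besselKThreeHalves (x : ℝ) : ℝ :=
  √(π / 2) * exp (-x) * (x ^ (-(1:ℝ) / 2) + x ^ (-(3:ℝ) / 2))

noncomputable def radialLaplace (k μ : ℝ) : ℝ := (√μ)⁻¹ * (μ⁻¹ / 2 + k⁻¹)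

theorem continuousOn_radialLaplace (k : ℝ) : ContinuousOn (radialLaplace k) (Ioi 0) := by
  intro μ (hμ : 0 < μ)
  have : √μ ≠ 0 := (sqrt_pos.mpr hμ).ne'
  unfold radialLaplace
  fun_prop (disch := positivity)

theorem integral_exp_mul_besselKThreeHalves {k x : ℝ} (hk : 0 < k) (hx : x < k) :
    ∫ r in Ioi 0, exp (r * x) * r * besselKThreeHalves (k * r)
      = π / √(2 * k) * radialLaplace k (k - x) := by
  have hμ : 0 < k - x := sub_pos.mpr hx
  have hgamma (a : ℝ) (ha : 0 < a) :
      ∫ r in Ioi 0, r ^ (a - 1) * exp (-((k - x) * r)) = (1 / (k - x)) ^ a * Gamma a :=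
    integral_rpow_mul_exp_neg_mul_Ioi ha hμ
  have hint (a : ℝ) (ha : 0 < a) :
      IntegrableOn (fun r => r ^ (a - 1) * exp (-((k - x) * r))) (Ioi 0) :=
    Integrable.of_integral_ne_zero (by rw [hgamma a ha]; positivity)
  have hsplit : EqOn (fun r => exp (r * x) * r * besselKThreeHalves (k * r))
      (fun r => √(π / 2) * k ^ (-(1:ℝ) / 2) * (r ^ ((3:ℝ) / 2 - 1) * exp (-((k - x) * r)))
        + √(π / 2) * k ^ (-(3:ℝ) / 2) * (r ^ ((1:ℝ) / 2 - 1) * exp (-((k - x) * r)))) (Ioi 0) := by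
    intro r (hr : 0 < r)
    have h1 : r ^ ((3:ℝ) / 2 - 1) = r * r ^ (-(1:ℝ) / 2) := by
      rw [← rpow_one_add' hr.le (by norm_num)]; norm_num
    have h3 : r ^ ((1:ℝ) / 2 - 1) = r * r ^ (-(3:ℝ) / 2) := by
      rw [← rpow_one_add' hr.le (by norm_num)]; norm_num
    have he : exp (r * x) * exp (-(k * r)) = exp (-((k - x) * r)) := by
      rw [← exp_add]; ring_nf
    simp only [besselKThreeHalves, mul_rpow hk.le hr.le, h1, h3, ← he]
    ring
  rw [setIntegral_congr_fun measurableSet_Ioi hsplit,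
    integral_add ((hint _ (by norm_num)).const_mul _) ((hint _ (by norm_num)).const_mul _),
    integral_const_mul, integral_const_mul, hgamma _ (by norm_num), hgamma _ (by norm_num),
    Gamma_three_halves, Gamma_one_half_eq, one_div, inv_rpow hμ.le, inv_rpow hμ.le,
    ← rpow_neg hμ.le, ← rpow_neg hμ.le, ← neg_div, ← neg_div, rpow_neg_one_half hμ.le,
    rpow_neg_three_halves hμ, rpow_neg_one_half hk.le, rpow_neg_three_halves hk,
    sqrt_div' _ zero_le_two, sqrt_mul' _ hk.le, radialLaplace]
  have : √π ^ 2 = π := sq_sqrt pi_pos.le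
  field_simp
  rw [this]

noncomputable def halfAnglePrimitive (k e x : ℝ) : ℝ :=
  x * (3 * k - 2 * e - 4 * (k - e) * x ^ 2) / (k * (k - e) * √(k - e + 2 * e * x ^ 2))

theorem hasDerivAt_halfAnglePrimitive {k e x : ℝ} (hk : k ≠ 0) (hke : k ≠ e)
    (hμ : 0 < k - e + 2 * e * x ^ 2) :
    HasDerivAt (halfAnglePrimitive k e)
      (2 * (1 - 4 * x ^ 2) * radialLaplace k (k - e + 2 * e * x ^ 2)) x := by
  have hke' : k - e ≠ 0 := sub_ne_zero.mpr hke
  have hs : 0 < √(k - e + 2 * e * x ^ 2) := sqrt_pos.mpr hμ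
  have hs2 : √(k - e + 2 * e * x ^ 2) ^ 2 = k - e + 2 * e * x ^ 2 := sq_sqrt hμ.le
  have hnum := (hasDerivAt_id' x).mul (((hasDerivAt_pow 2 x).const_mul (4 * (k - e))).const_sub
    (3 * k - 2 * e))
  have hden := ((((hasDerivAt_pow 2 x).const_mul (2 * e)).const_add (k - e)).sqrt
    hμ.ne').const_mul (k * (k - e))
  refine (hnum.div hden (by positivity)).congr_deriv ?_
  simp only [Pi.mul_apply, radialLaplace, Nat.cast_ofNat]
  field_simp
  rw [hs2]
  ring

theorem sin_three_mul_halfAnglePrimitive_sub {k : ℝ} (hk : 1 < k) (α : ℝ) :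
    sin (3 * α) * halfAnglePrimitive k 1 (sin α)
      - cos (3 * α) * halfAnglePrimitive k (-1) (cos α)
      = √(k - cos (2 * α)) * (k + 2 * cos (2 * α)) / (k * (k ^ 2 - 1)) := by
  have hst := sin_sq_add_cos_sq α
  have hμ : 0 < k - cos (2 * α) := by linarith [cos_le_one (2 * α)]
  have hsq := sq_sqrt hμ.le
  have hs : √(k - 1 + 2 * 1 * sin α ^ 2) = √(k - cos (2 * α)) := by
    congr 1; rw [cos_two_mul']; linear_combination hst
  have ht : √(k - -1 + 2 * -1 * cos α ^ 2) = √(k - cos (2 * α)) := by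
    congr 1; rw [cos_two_mul']; linear_combination -hst
  have key : sin (3 * α) * sin α * (3 * k - 2 - 4 * (k - 1) * sin α ^ 2) * (k + 1)
      - cos (3 * α) * cos α * (3 * k + 2 - 4 * (k + 1) * cos α ^ 2) * (k - 1)
      = (k - cos (2 * α)) * (k + 2 * cos (2 * α)) := by
    rw [sin_three_mul, cos_three_mul, cos_two_mul']
    linear_combination ((k ^ 2 - 1) * ((4 * (sin α ^ 2 + cos α ^ 2 - 1) + 3) ^ 2
      - 48 * sin α ^ 2 * cos α ^ 2) - 1 + (4 * k - 2) * (sin α ^ 2 + cos α ^ 2 - 1)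
      + 4 * k - 8 * k * sin α ^ 2) * hst
  have hk1 : k - 1 ≠ 0 := by linarith
  have hk1' : k - -1 ≠ 0 := by linarith
  have hk2 : k ^ 2 - 1 ≠ 0 := by nlinarith
  have hk0 : k ≠ 0 := by linarith
  have hs0 : 0 < √(k - cos (2 * α)) := sqrt_pos.mpr hμ
  unfold halfAnglePrimitive
  rw [hs, ht]
  calc _ = (sin (3 * α) * sin α * (3 * k - 2 - 4 * (k - 1) * sin α ^ 2) * (k + 1)
      - cos (3 * α) * cos α * (3 * k + 2 - 4 * (k + 1) * cos α ^ 2) * (k - 1))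
        / (k * (k ^ 2 - 1) * √(k - cos (2 * α))) := by
        field_simp
        ring
    _ = _ := by
        rw [key]
        field_simp
        linear_combination -(k + 2 * cos (2 * α)) * hsq

noncomputable def anglePrimitive (k θ₀ θ : ℝ) : ℝ :=
  cos (3 * θ₀ / 2) * halfAnglePrimitive k 1 (sin ((θ - θ₀) / 2))
    - sin (3 * θ₀ / 2) * halfAnglePrimitive k (-1) (cos ((θ - θ₀) / 2))

theorem hasDerivAt_anglePrimitive {k : ℝ} (hk : 1 < k) (θ₀ θ : ℝ) :
    HasDerivAt (anglePrimitive k θ₀)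
      (cos (3 * θ / 2) * radialLaplace k (k - cos (θ - θ₀))) θ := by
  have hst := sin_sq_add_cos_sq ((θ - θ₀) / 2)
  have hcos : cos (θ - θ₀) = 2 * cos ((θ - θ₀) / 2) ^ 2 - 1 := by
    rw [← cos_two_mul]; ring_nf
  have hμs : k - 1 + 2 * 1 * sin ((θ - θ₀) / 2) ^ 2 = k - cos (θ - θ₀) := by
    linear_combination hcos + 2 * hst
  have hμt : k - -1 + 2 * -1 * cos ((θ - θ₀) / 2) ^ 2 = k - cos (θ - θ₀) := by
    linear_combination hcos
  have hμ : 0 < k - cos (θ - θ₀) := by linarith [cos_le_one (θ - θ₀)]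
  have hhalf : HasDerivAt (fun θ => (θ - θ₀) / 2) (1 / 2) θ :=
    ((hasDerivAt_id' θ).sub_const θ₀).div_const 2
  have hG₁ := (hasDerivAt_halfAnglePrimitive (by positivity) hk.ne' (hμs ▸ hμ)).comp θ
    ((hasDerivAt_sin _).comp θ hhalf)
  have hG₂ := (hasDerivAt_halfAnglePrimitive (by positivity) (by linarith)
    (hμt ▸ hμ)).comp θ ((hasDerivAt_cos _).comp θ hhalf)
  refine ((hG₁.const_mul _).sub (hG₂.const_mul _)).congr_deriv ?_
  simp only [Function.comp_apply]
  rw [hμs, hμt, show 3 * θ / 2 = 3 * ((θ - θ₀) / 2) + 3 * θ₀ / 2 by ring, cos_add,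
    cos_three_mul, sin_three_mul]
  linear_combination radialLaplace k (k - cos (θ - θ₀)) *
    (-4 * cos (3 * θ₀ / 2) * cos ((θ - θ₀) / 2) - 4 * sin (3 * θ₀ / 2) * sin ((θ - θ₀) / 2)) * hst

theorem integral_cos_mul_radialLaplace {k : ℝ} (hk : 1 < k) (θ₀ : ℝ) :
    ∫ θ in -(π / 3)..π / 3, cos (3 * θ / 2) * radialLaplace k (k - cos (θ - θ₀))
      = (√(k - cos (π / 3 - θ₀)) * (k + 2 * cos (π / 3 - θ₀))
        + √(k - cos (π / 3 + θ₀)) * (k + 2 * cos (π / 3 + θ₀))) / (k * (k ^ 2 - 1)) := by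
  have hcont : Continuous fun θ => cos (3 * θ / 2) * radialLaplace k (k - cos (θ - θ₀)) := by
    refine (by fun_prop : Continuous fun θ : ℝ => cos (3 * θ / 2)).mul ?_
    exact (continuousOn_radialLaplace k).comp_continuous (by fun_prop)
      fun θ => sub_pos.mpr ((cos_le_one _).trans_lt hk)
  rw [intervalIntegral.integral_eq_sub_of_hasDerivAt
    (fun θ _ => hasDerivAt_anglePrimitive hk θ₀ θ) (hcont.intervalIntegrable _ _)]
  have hplus : anglePrimitive k θ₀ (π / 3)
      = √(k - cos (π / 3 - θ₀)) * (k + 2 * cos (π / 3 - θ₀)) / (k * (k ^ 2 - 1)) := by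
    have h := sin_three_mul_halfAnglePrimitive_sub hk ((π / 3 - θ₀) / 2)
    rw [show 2 * ((π / 3 - θ₀) / 2) = π / 3 - θ₀ by ring] at h
    rw [← h, anglePrimitive, show 3 * θ₀ / 2 = π / 2 - 3 * ((π / 3 - θ₀) / 2) by ring,
      cos_pi_div_two_sub, sin_pi_div_two_sub]
  have hminus : anglePrimitive k θ₀ (-(π / 3))
      = -(√(k - cos (π / 3 + θ₀)) * (k + 2 * cos (π / 3 + θ₀)) / (k * (k ^ 2 - 1))) := by
    have h := sin_three_mul_halfAnglePrimitive_sub hk ((-(π / 3) - θ₀) / 2)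
    rw [show 2 * ((-(π / 3) - θ₀) / 2) = -(π / 3 + θ₀) by ring, cos_neg] at h
    rw [← h, anglePrimitive, show 3 * θ₀ / 2 = -(3 * ((-(π / 3) - θ₀) / 2) + π / 2) by ring,
      cos_neg, sin_neg, cos_add_pi_div_two, sin_add_pi_div_two]
    ring
  rw [hplus, hminus]
  ring

theorem stmt_0 (θ₀ : ℝ)
    (lam : ℝ) (hlam : 1/2 < lam)
    (c a b : ℝ)
    (hc : c = (2 * Real.sqrt 3)⁻¹)
    (ha : a = (-Real.cos θ₀ + Real.sqrt 3 * Real.sin θ₀) / (2 * (3:ℝ) ^ ((1:ℝ)/4)))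
    (hb : b = (-Real.cos θ₀ - Real.sqrt 3 * Real.sin θ₀) / (2 * (3:ℝ) ^ ((1:ℝ)/4))) :
    ((2:ℝ) ^ ((3:ℝ)/2) * (2*lam) ^ ((3:ℝ)/4) / (Real.pi * Real.Gamma (3/2))) *
      (∫ θ in (-(Real.pi/3))..(Real.pi/3), ∫ r in Set.Ioi (0:ℝ),
        Real.exp (r * Real.cos (θ - θ₀)) * r *
          (Real.sqrt (Real.pi/2) * Real.exp (-(Real.sqrt (2*lam) * r)) *
            ((Real.sqrt (2*lam) * r) ^ (-(1:ℝ)/2) + (Real.sqrt (2*lam) * r) ^ (-(3:ℝ)/2))) *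
          Real.cos (3*θ/2))
    = (4 * (2:ℝ) ^ ((1:ℝ)/4) * lam ^ ((3:ℝ)/4) / ((1 - 2*lam) * Real.sqrt Real.pi)) *
        (Real.sqrt (2 + b / Real.sqrt (c*lam)) * (b / Real.sqrt (c*lam) - 1) +
         Real.sqrt (2 + a / Real.sqrt (c*lam)) * (a / Real.sqrt (c*lam) - 1)) := by
  set k := √(2 * lam)
  have hk2 : k ^ 2 = 2 * lam := sq_sqrt (by linarith)
  have hk : 1 < k := by nlinarith [sqrt_nonneg (2 * lam)]
  have hk0 : 0 < k := by linarith
  have hinner (θ : ℝ) : ∫ r in Ioi 0, exp (r * cos (θ - θ₀)) * r *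
      (√(π / 2) * exp (-(k * r)) * ((k * r) ^ (-(1:ℝ) / 2) + (k * r) ^ (-(3:ℝ) / 2))) *
        cos (3 * θ / 2)
      = π / √(2 * k) * (cos (3 * θ / 2) * radialLaplace k (k - cos (θ - θ₀))) := by
    have h := integral_exp_mul_besselKThreeHalves hk0 ((cos_le_one (θ - θ₀)).trans_lt hk)
    unfold besselKThreeHalves at h
    rw [integral_mul_const, h]
    ring
  simp_rw [hinner]
  rw [intervalIntegral.integral_const_mul, integral_cos_mul_radialLaplace hk]
  have hcl : √(c * lam) = k / (2 * (3:ℝ) ^ ((1:ℝ) / 4)) := hc ▸ sqrt_inv_two_sqrt_three_mul lam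
  have hq : (2 * (3:ℝ) ^ ((1:ℝ) / 4)) ≠ 0 := by positivity
  have hb' : b / √(c * lam) = -2 * cos (π / 3 - θ₀) / k := by
    rw [hb, hcl, neg_cos_sub_sqrt_three_mul_sin, div_div_div_cancel_right₀ hq]
  have ha' : a / √(c * lam) = -2 * cos (π / 3 + θ₀) / k := by
    rw [ha, hcl, neg_cos_add_sqrt_three_mul_sin, div_div_div_cancel_right₀ hq]
  rw [hb', ha', sqrt_two_add_mul_sub_one hk0, sqrt_two_add_mul_sub_one hk0, Gamma_three_halves,
    rpow_three_halves zero_le_two, rpow_three_quarters (by linarith), mul_assoc 4,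
    two_rpow_mul_rpow_three_quarters (by linarith), ← hk2, sqrt_mul zero_le_two]
  have hsk : 0 < √k := sqrt_pos.mpr hk0
  have hk21 : k ^ 2 - 1 ≠ 0 := by nlinarith
  have h1k2 : 1 - k ^ 2 ≠ 0 := by nlinarith
  field_simp
  ring
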